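/- Let $X, Y$ be independent random vectors in $\mathbb{R}^d$ and $\alpha \in (0,2)$ with $E|X|^\alpha + E|Y|^\alpha < \infty$. Then $\mathcal{E}(X,Y;\alpha) := 2E|X-Y|^\alpha - E|X-X'|^\alpha - E|Y-Y'|^\alpha \geq 0$, where $X'$ and $Y'$ are independent copies of $X$ and $Y$ (all mutually independent). -/

import Mathlib

/-!
For `0 < α < 2` and `r ≥ 0`, substituting `u = t r²` gives
`r ^ α = c⁻¹ ∫₀^∞ (1 - e^{-t r²}) t^{-1-α/2} dt` with `c = levyConst (α / 2) > 0`.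
Taking `r = ‖x - y‖` and using Fubini,
`𝓔(X,Y;α) = c⁻¹ ∫₀^∞ (K_t(μ,μ) + K_t(ν,ν) - 2 K_t(μ,ν)) t^{-1-α/2} dt`, where
`K_t(ρ,σ) = E e^{-t‖X-Y‖²}` for independent `X ~ ρ`, `Y ~ σ`. The Gaussian `e^{-t‖w‖²}` is the
characteristic function of a centred Gaussian measure `γ_t`, so Fubini again gives
`K_t(ρ,σ) = ∫ φ_ρ conj φ_σ dγ_t`, and the bracket is `∫ |φ_μ - φ_ν|² dγ_t ≥ 0`.
-/

open MeasureTheory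

/-- The energy distance `𝓔(X,Y;α) = 2E‖X-Y‖^α - E‖X-X'‖^α - E‖Y-Y'‖^α`, expressed via the
laws `μ` of `X` and `ν` of `Y`; mutual independence of `X, X', Y, Y'` means the expectations
are integrals with respect to product measures. -/
noncomputable def energyDist {d : ℕ} (μ ν : Measure (EuclideanSpace ℝ (Fin d))) (α : ℝ) : ℝ :=
  2 * ∫ x, ∫ y, ‖x - y‖ ^ α ∂ν ∂μ
    - ∫ x, ∫ x', ‖x - x'‖ ^ α ∂μ ∂μ
    - ∫ y, ∫ y', ‖y - y'‖ ^ α ∂ν ∂ν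

open ProbabilityTheory Real Set
open scoped RealInnerProductSpace ComplexConjugate

-- Equal to `Γ(1 - p) / p` for `0 < p < 1`.
noncomputable def levyConst (p : ℝ) : ℝ := ∫ u in Ioi 0, (1 - exp (-u)) * u ^ (-1 - p)

section LevyConst

variable {p : ℝ}

lemma one_sub_exp_neg_nonneg {u : ℝ} (hu : 0 ≤ u) : 0 ≤ 1 - exp (-u) := by
  simpa using exp_le_one_iff.mpr (neg_nonpos.mpr hu)

lemma integrableOn_one_sub_exp_neg_mul_rpow (hp : 0 < p) (hp1 : p < 1) :
    IntegrableOn (fun u : ℝ => (1 - exp (-u)) * u ^ (-1 - p)) (Ioi 0) := by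
  have hmeas : Measurable fun u : ℝ => (1 - exp (-u)) * u ^ (-1 - p) := by fun_prop
  rw [← Ioc_union_Ioi_eq_Ioi zero_le_one]
  refine IntegrableOn.union ?_ ?_
  · have hdom : IntegrableOn (fun u : ℝ => u ^ (-p)) (Ioc 0 1) :=
      (intervalIntegrable_iff_integrableOn_Ioc_of_le zero_le_one).mp
        (intervalIntegral.intervalIntegrable_rpow' (by linarith))
    refine hdom.mono' hmeas.aestronglyMeasurable ?_
    filter_upwards [ae_restrict_mem measurableSet_Ioc] with u hu
    have hw : 0 ≤ u ^ (-1 - p) := rpow_nonneg hu.1.le _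
    rw [norm_of_nonneg (mul_nonneg (one_sub_exp_neg_nonneg hu.1.le) hw)]
    calc (1 - exp (-u)) * u ^ (-1 - p) ≤ u * u ^ (-1 - p) := by
          gcongr; linarith [add_one_le_exp (-u)]
      _ = u ^ (-p) := by rw [← rpow_one_add' hu.1.le (by linarith)]; ring_nf
  · refine (integrableOn_Ioi_rpow_of_lt (by linarith : -1 - p < -1) one_pos).mono'
      hmeas.aestronglyMeasurable ?_
    filter_upwards [ae_restrict_mem measurableSet_Ioi] with u (hu : 1 < u)
    have hw : 0 ≤ u ^ (-1 - p) := rpow_nonneg (by linarith) _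
    rw [norm_of_nonneg (mul_nonneg (one_sub_exp_neg_nonneg (by linarith)) hw)]
    exact mul_le_of_le_one_left hw (by linarith [exp_pos (-u)])

lemma sq_rpow_div_two {x : ℝ} (hx : 0 ≤ x) (a : ℝ) : (x ^ 2) ^ (a / 2) = x ^ a := by
  rw [← rpow_natCast_mul hx, Nat.cast_ofNat, mul_div_cancel₀ _ two_ne_zero]

lemma levyConst_pos (hp : 0 < p) (hp1 : p < 1) : 0 < levyConst p := by
  refine (setIntegral_pos_iff_support_of_nonneg_ae ?_
    (integrableOn_one_sub_exp_neg_mul_rpow hp hp1)).2 ?_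
  · filter_upwards [ae_restrict_mem measurableSet_Ioi] with u (hu : 0 < u)
    exact mul_nonneg (one_sub_exp_neg_nonneg hu.le) (rpow_nonneg hu.le _)
  · have hsupp : Ioi 0 ⊆ Function.support fun u : ℝ => (1 - exp (-u)) * u ^ (-1 - p) :=
      fun u (hu : 0 < u) => (mul_pos (by simpa using hu) (rpow_pos_of_pos hu _)).ne'
    rw [inter_eq_right.2 hsupp]
    simp

lemma one_sub_exp_neg_mul_mul_rpow_eq {r t : ℝ} (hr : 0 < r) (ht : 0 ≤ t) :
    (1 - exp (-(t * r))) * t ^ (-1 - p)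
      = r ^ (1 + p) * ((1 - exp (-(r * t))) * (r * t) ^ (-1 - p)) := by
  rw [mul_rpow hr.le ht, mul_comm t r, mul_left_comm, ← mul_assoc (r ^ (1 + p)),
    ← rpow_add hr, show 1 + p + (-1 - p) = 0 by ring, rpow_zero, one_mul]

lemma integrableOn_one_sub_exp_neg_mul_mul_rpow (hp : 0 < p) (hp1 : p < 1) {r : ℝ} (hr : 0 ≤ r) :
    IntegrableOn (fun t : ℝ => (1 - exp (-(t * r))) * t ^ (-1 - p)) (Ioi 0) := by
  rcases hr.eq_or_lt with rfl | hr
  · simp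
  have hscaled := (integrableOn_Ioi_comp_mul_left_iff
    (fun u : ℝ => (1 - exp (-u)) * u ^ (-1 - p)) 0 hr).2
    (by simpa using integrableOn_one_sub_exp_neg_mul_rpow hp hp1)
  exact IntegrableOn.congr_fun (hscaled.const_mul (r ^ (1 + p)))
    (fun t (ht : 0 < t) => (one_sub_exp_neg_mul_mul_rpow_eq hr ht.le).symm) measurableSet_Ioi

lemma integral_one_sub_exp_neg_mul_mul_rpow (hp : 0 < p) {r : ℝ} (hr : 0 ≤ r) :
    ∫ t in Ioi 0, (1 - exp (-(t * r))) * t ^ (-1 - p) = levyConst p * r ^ p := by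
  rcases hr.eq_or_lt with rfl | hr
  · simp [zero_rpow hp.ne']
  rw [setIntegral_congr_fun measurableSet_Ioi
      (fun t (ht : 0 < t) => one_sub_exp_neg_mul_mul_rpow_eq hr ht.le),
    integral_const_mul, integral_comp_mul_left_Ioi (fun u => (1 - exp (-u)) * u ^ (-1 - p)) 0 hr,
    mul_zero, smul_eq_mul, ← mul_assoc, ← rpow_neg_one, ← rpow_add hr, levyConst]
  ring_nf

end LevyConst

section Subordination

variable {p : ℝ} {Ω : Type*} [MeasurableSpace Ω] {μ : Measure Ω} {f : Ω → ℝ}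

lemma integrable_one_sub_exp_neg_mul_mul_rpow_prod (hp : 0 < p) (hp1 : p < 1) (hf : Measurable f)
    (hf0 : ∀ ω, 0 ≤ f ω) (hint : Integrable (fun ω => f ω ^ p) μ) :
    Integrable (fun z : Ω × ℝ => (1 - exp (-(z.2 * f z.1))) * z.2 ^ (-1 - p))
      (μ.prod (volume.restrict (Ioi 0))) := by
  refine (integrable_prod_iff (by fun_prop)).2
    ⟨ae_of_all _ fun ω => integrableOn_one_sub_exp_neg_mul_mul_rpow hp hp1 (hf0 ω), ?_⟩
  refine (hint.const_mul (levyConst p)).congr (ae_of_all _ fun ω => ?_)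
  dsimp only
  rw [← integral_one_sub_exp_neg_mul_mul_rpow hp (hf0 ω)]
  refine setIntegral_congr_fun measurableSet_Ioi fun t (ht : 0 < t) => ?_
  exact (norm_of_nonneg (mul_nonneg (one_sub_exp_neg_nonneg (mul_nonneg ht.le (hf0 ω)))
    (rpow_nonneg ht.le _))).symm

lemma integrableOn_integral_one_sub_exp_neg_mul_mul_rpow [SFinite μ] (hp : 0 < p) (hp1 : p < 1)
    (hf : Measurable f) (hf0 : ∀ ω, 0 ≤ f ω) (hint : Integrable (fun ω => f ω ^ p) μ) :
    IntegrableOn (fun t => (∫ ω, (1 - exp (-(t * f ω))) ∂μ) * t ^ (-1 - p)) (Ioi 0) := by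
  simpa only [IntegrableOn, integral_mul_const] using
    (integrable_one_sub_exp_neg_mul_mul_rpow_prod hp hp1 hf hf0 hint).integral_prod_right

lemma integral_rpow_eq_integral_one_sub_exp [SFinite μ] (hp : 0 < p) (hp1 : p < 1)
    (hf : Measurable f) (hf0 : ∀ ω, 0 ≤ f ω) (hint : Integrable (fun ω => f ω ^ p) μ) :
    ∫ ω, f ω ^ p ∂μ
      = (levyConst p)⁻¹ * ∫ t in Ioi 0, (∫ ω, (1 - exp (-(t * f ω))) ∂μ) * t ^ (-1 - p) := by
  calc ∫ ω, f ω ^ p ∂μ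
      = ∫ ω, (levyConst p)⁻¹ * (∫ t in Ioi 0, (1 - exp (-(t * f ω))) * t ^ (-1 - p)) ∂μ := by
        simp only [integral_one_sub_exp_neg_mul_mul_rpow hp (hf0 _),
          inv_mul_cancel_left₀ (levyConst_pos hp hp1).ne']
    _ = (levyConst p)⁻¹ * ∫ t in Ioi 0, (∫ ω, (1 - exp (-(t * f ω))) * t ^ (-1 - p) ∂μ) := by
        rw [integral_const_mul, integral_integral_swap
          (integrable_one_sub_exp_neg_mul_mul_rpow_prod hp hp1 hf hf0 hint)]
    _ = _ := by simp only [integral_mul_const]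

end Subordination

section NormedAddCommGroup

variable {E : Type*} [NormedAddCommGroup E] [MeasurableSpace E] [BorelSpace E]
  [SecondCountableTopology E]

lemma integrable_rpow_norm_sub_prod {α : ℝ} (hα : 0 < α) {ρ σ : Measure E} [IsFiniteMeasure ρ]
    [IsFiniteMeasure σ] (hρ : Integrable (fun x => ‖x‖ ^ α) ρ)
    (hσ : Integrable (fun y => ‖y‖ ^ α) σ) :
    Integrable (fun z : E × E => ‖z.1 - z.2‖ ^ α) (ρ.prod σ) := by
  have hLp : ∀ τ : Measure E, Integrable (fun x => ‖x‖ ^ α) τ ↔ MemLp id (.ofReal α) τ :=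
    fun τ => by
      have h := integrable_norm_rpow_iff (μ := τ) aestronglyMeasurable_id
        (ENNReal.ofReal_pos.2 hα).ne' ENNReal.ofReal_ne_top
      rwa [ENNReal.toReal_ofReal hα.le] at h
  rw [hLp] at hρ hσ
  rw [← ENNReal.toReal_ofReal hα.le]
  exact ((hρ.comp_fst σ).sub (hσ.comp_snd ρ)).integrable_norm_rpow (ENNReal.ofReal_pos.2 hα).ne'
    ENNReal.ofReal_ne_top

noncomputable def gaussianPairing (t : ℝ) (ρ σ : Measure E) : ℝ :=
  ∫ x, ∫ y, exp (-(t * ‖x - y‖ ^ 2)) ∂σ ∂ρ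

lemma integral_one_sub_exp_neg_mul_norm_sub_sq_prod {t : ℝ} (ht : 0 ≤ t) (ρ σ : Measure E)
    [IsProbabilityMeasure ρ] [IsProbabilityMeasure σ] :
    ∫ z, (1 - exp (-(t * ‖z.1 - z.2‖ ^ 2))) ∂(ρ.prod σ)
      = 1 - gaussianPairing t ρ σ := by
  have hexp : Integrable (fun z : E × E => exp (-(t * ‖z.1 - z.2‖ ^ 2))) (ρ.prod σ) :=
    .of_bound (by fun_prop) 1 (ae_of_all _ fun z => by
      rw [norm_of_nonneg (exp_pos _).le, exp_le_one_iff, neg_nonpos]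
      positivity)
  rw [integral_sub (integrable_const 1) hexp, integral_const, integral_prod _ hexp, gaussianPairing]
  simp

variable {α : ℝ} {ρ σ : Measure E} [IsProbabilityMeasure ρ] [IsProbabilityMeasure σ]

lemma integrable_norm_sub_sq_rpow_half_prod (hα : 0 < α) (hρ : Integrable (fun x => ‖x‖ ^ α) ρ)
    (hσ : Integrable (fun y => ‖y‖ ^ α) σ) :
    Integrable (fun z : E × E => (‖z.1 - z.2‖ ^ 2) ^ (α / 2)) (ρ.prod σ) := by
  refine (integrable_rpow_norm_sub_prod hα hρ hσ).congr (ae_of_all _ fun z => ?_)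
  exact (sq_rpow_div_two (norm_nonneg (z.1 - z.2)) α).symm

lemma integrableOn_one_sub_gaussianPairing_mul_rpow (hα : 0 < α) (hα2 : α < 2)
    (hρ : Integrable (fun x => ‖x‖ ^ α) ρ) (hσ : Integrable (fun y => ‖y‖ ^ α) σ) :
    IntegrableOn (fun t => (1 - gaussianPairing t ρ σ) * t ^ (-1 - α / 2)) (Ioi 0) := by
  refine IntegrableOn.congr_fun (integrableOn_integral_one_sub_exp_neg_mul_mul_rpow
    (by linarith) (by linarith) (by fun_prop) (fun z => by positivity)
    (integrable_norm_sub_sq_rpow_half_prod hα hρ hσ)) (fun t (ht : 0 < t) => ?_) measurableSet_Ioi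
  rw [integral_one_sub_exp_neg_mul_norm_sub_sq_prod ht.le]

lemma integral_integral_rpow_norm_sub_eq (hα : 0 < α) (hα2 : α < 2)
    (hρ : Integrable (fun x => ‖x‖ ^ α) ρ) (hσ : Integrable (fun y => ‖y‖ ^ α) σ) :
    ∫ x, ∫ y, ‖x - y‖ ^ α ∂σ ∂ρ = (levyConst (α / 2))⁻¹
      * ∫ t in Ioi 0, (1 - gaussianPairing t ρ σ) * t ^ (-1 - α / 2) := by
  have hrep := integral_rpow_eq_integral_one_sub_exp (μ := ρ.prod σ) (by linarith) (by linarith)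
    (by fun_prop) (fun z => by positivity) (integrable_norm_sub_sq_rpow_half_prod hα hρ hσ)
  simp only [sq_rpow_div_two (norm_nonneg _)] at hrep
  rw [← integral_prod _ (integrable_rpow_norm_sub_prod hα hρ hσ), hrep,
    setIntegral_congr_fun measurableSet_Ioi fun t (ht : 0 < t) =>
      congrArg (· * t ^ (-1 - α / 2)) (integral_one_sub_exp_neg_mul_norm_sub_sq_prod ht.le ρ σ)]

end NormedAddCommGroup

section CharFun

open Complex

variable {E : Type*} [NormedAddCommGroup E] [InnerProductSpace ℝ E] [MeasurableSpace E]
  [BorelSpace E] [SecondCountableTopology E]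

lemma integral_integral_charFun_sub (γ ρ σ : Measure E) [IsFiniteMeasure γ]
    [IsFiniteMeasure ρ] [IsFiniteMeasure σ] :
    ∫ x, ∫ y, charFun γ (x - y) ∂σ ∂ρ = ∫ v, charFun ρ v * conj (charFun σ v) ∂γ := by
  have hdiff : Integrable (fun z : E × E => charFun γ (z.1 - z.2)) (ρ.prod σ) :=
    .of_bound (by fun_prop) _ (ae_of_all _ fun _ => norm_charFun_le _)
  have hswap : Integrable (fun p : (E × E) × E => exp (⟪p.2, p.1.1 - p.1.2⟫ * I))
      ((ρ.prod σ).prod γ) :=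
    .of_bound (by fun_prop) 1 (ae_of_all _ fun _ => by rw [norm_exp_ofReal_mul_I])
  calc ∫ x, ∫ y, charFun γ (x - y) ∂σ ∂ρ
      = ∫ z, ∫ v, exp (⟪v, z.1 - z.2⟫ * I) ∂γ ∂(ρ.prod σ) := (integral_prod _ hdiff).symm
    _ = ∫ v, ∫ z, exp (⟪v, z.1 - z.2⟫ * I) ∂(ρ.prod σ) ∂γ := integral_integral_swap hswap
    _ = ∫ v, charFun ρ v * conj (charFun σ v) ∂γ := by
      refine integral_congr_ae (ae_of_all _ fun v => ?_)
      dsimp only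
      rw [← charFun_neg, charFun_apply, charFun_apply, ← integral_prod_mul]
      refine integral_congr_ae (ae_of_all _ fun z => ?_)
      dsimp only
      rw [← Complex.exp_add, inner_sub_right, inner_neg_right, real_inner_comm z.1,
        real_inner_comm z.2]
      push_cast
      ring_nf

lemma integrable_charFun_mul_conj_charFun (γ ρ σ : Measure E) [IsFiniteMeasure γ]
    [IsFiniteMeasure ρ] [IsFiniteMeasure σ] :
    Integrable (fun v => charFun ρ v * conj (charFun σ v)) γ :=
  .of_bound (by fun_prop) (ρ.real univ * σ.real univ) (ae_of_all _ fun v => by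
    rw [norm_mul, RCLike.norm_conj]
    exact mul_le_mul (norm_charFun_le v) (norm_charFun_le v) (norm_nonneg _) (by positivity))

-- The gap between the two sides is `∫ |φ_ρ - φ_σ|² dγ`.
lemma two_mul_re_integral_integral_charFun_sub_le (γ ρ σ : Measure E) [IsFiniteMeasure γ]
    [IsFiniteMeasure ρ] [IsFiniteMeasure σ] :
    2 * (∫ x, ∫ y, charFun γ (x - y) ∂σ ∂ρ).re
      ≤ (∫ x, ∫ y, charFun γ (x - y) ∂ρ ∂ρ).re + (∫ x, ∫ y, charFun γ (x - y) ∂σ ∂σ).re := by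
  have hI := integrable_charFun_mul_conj_charFun (E := E) γ
  simp only [integral_integral_charFun_sub]
  have hsq : ∫ v, (normSq (charFun ρ v - charFun σ v) : ℂ) ∂γ
      = ∫ v, charFun ρ v * conj (charFun ρ v) ∂γ + ∫ v, charFun σ v * conj (charFun σ v) ∂γ
        - ∫ v, charFun ρ v * conj (charFun σ v) ∂γ
        - ∫ v, charFun σ v * conj (charFun ρ v) ∂γ := by
    have hpt : ∀ v, (normSq (charFun ρ v - charFun σ v) : ℂ)
        = charFun ρ v * conj (charFun ρ v) + charFun σ v * conj (charFun σ v)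
          - charFun ρ v * conj (charFun σ v) - charFun σ v * conj (charFun ρ v) := fun v => by
      rw [← mul_conj, map_sub]
      ring
    simp_rw [hpt]
    rw [integral_sub, integral_sub, integral_add]
    exacts [hI ρ ρ, hI σ σ, (hI ρ ρ).add (hI σ σ), hI ρ σ, ((hI ρ ρ).add (hI σ σ)).sub (hI ρ σ),
      hI σ ρ]
  have hswap : ∫ v, charFun σ v * conj (charFun ρ v) ∂γ
      = conj (∫ v, charFun ρ v * conj (charFun σ v) ∂γ) := by
    simp only [← integral_conj, map_mul, conj_conj, mul_comm]
  have hnonneg : 0 ≤ ∫ v, normSq (charFun ρ v - charFun σ v) ∂γ :=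
    integral_nonneg fun v => normSq_nonneg _
  rw [integral_complex_ofReal] at hsq
  have := congrArg re hsq
  simp only [hswap, ofReal_re, sub_re, add_re, conj_re] at this
  linarith

end CharFun

section Gaussian

variable {E : Type*} [NormedAddCommGroup E] [InnerProductSpace ℝ E] [FiniteDimensional ℝ E]
  [MeasurableSpace E] [BorelSpace E]

lemma charFun_stdGaussian_map_smul {t : ℝ} (ht : 0 ≤ t) (w : E) :
    charFun ((stdGaussian E).map (√(2 * t) • ·)) w = Real.exp (-(t * ‖w‖ ^ 2)) := by
  rw [charFun_map_smul, charFun_stdGaussian, norm_smul, norm_of_nonneg (sqrt_nonneg _),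
    Complex.ofReal_exp]
  congr 1
  push_cast
  rw [mul_pow, ← Complex.ofReal_pow, sq_sqrt (by positivity)]
  push_cast
  ring

lemma two_mul_gaussianPairing_le {t : ℝ} (ht : 0 ≤ t) (ρ σ : Measure E) [IsFiniteMeasure ρ]
    [IsFiniteMeasure σ] :
    2 * gaussianPairing t ρ σ ≤ gaussianPairing t ρ ρ + gaussianPairing t σ σ := by
  simpa only [gaussianPairing, charFun_stdGaussian_map_smul ht, integral_complex_ofReal,
    Complex.ofReal_re] using
    two_mul_re_integral_integral_charFun_sub_le ((stdGaussian E).map (√(2 * t) • ·)) ρ σ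

end Gaussian

/-- For independent `X ~ μ`, `Y ~ ν` on `ℝ^d` with finite `α`-th moments and `α ∈ (0,2)`,
the energy distance is nonnegative. -/
theorem energyDist_nonneg
    (d : ℕ) (α : ℝ) (hα : 0 < α) (hα2 : α < 2)
    (μ ν : Measure (EuclideanSpace ℝ (Fin d)))
    [IsProbabilityMeasure μ] [IsProbabilityMeasure ν]
    (hμ : Integrable (fun x => ‖x‖ ^ α) μ) (hν : Integrable (fun y => ‖y‖ ^ α) ν) :
    0 ≤ energyDist μ ν α := by
  have hc : 0 ≤ (levyConst (α / 2))⁻¹ := inv_nonneg.2 (levyConst_pos (by linarith) (by linarith)).le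
  have iμν := integrableOn_one_sub_gaussianPairing_mul_rpow hα hα2 hμ hν
  have iμμ := integrableOn_one_sub_gaussianPairing_mul_rpow hα hα2 hμ hμ
  have iνν := integrableOn_one_sub_gaussianPairing_mul_rpow hα hα2 hν hν
  rw [energyDist, integral_integral_rpow_norm_sub_eq hα hα2 hμ hν,
    integral_integral_rpow_norm_sub_eq hα hα2 hμ hμ,
    integral_integral_rpow_norm_sub_eq hα hα2 hν hν]
  calc 0 ≤ (levyConst (α / 2))⁻¹ * ∫ t in Ioi 0,
        (2 * ((1 - gaussianPairing t μ ν) * t ^ (-1 - α / 2))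
          - (1 - gaussianPairing t μ μ) * t ^ (-1 - α / 2)
          - (1 - gaussianPairing t ν ν) * t ^ (-1 - α / 2)) := by
        refine mul_nonneg hc (setIntegral_nonneg measurableSet_Ioi fun t (ht : 0 < t) => ?_)
        nlinarith [two_mul_gaussianPairing_le ht.le μ ν, rpow_nonneg ht.le (-1 - α / 2)]
    _ = _ := by
        rw [integral_sub, integral_sub, integral_const_mul]
        · ring
        exacts [iμν.const_mul 2, iμμ, (iμν.const_mul 2).sub iμμ, iνν]
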